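/- Rigidity for the Gauss–Bonnet Penrose inequality (equality case of Theorem 1.2, radial form). Let n ≥ 3, λ ≥ 0, α > 0, α̃ = (n−2)(n−3)·α, r₊ > 0, and let V, k_I, k_S be spherically symmetric radial data on [r₊,∞) satisfying the radial Gauss–Bonnet constraints with matter energy density μ̃ and radial momentum density J̃_ν. Assume the dominant energy condition μ̃(r) ≥ |J̃_ν(r)| and the outermost condition H(r) > |k_S(r)| for all r > r₊. If the generalized Gauss–Bonnet Hawking mass m_GB is constant on [r₊,∞), then μ̃(r) = 0 and J̃_ν(r) = 0 for all r > r₊. -/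

import Mathlib

open Real Filter

/-- Mean curvature of the coordinate sphere of radius `r`: `H = (n-1)√(V r)/r`. -/
noncomputable def sphMeanCurv (n : ℕ) (V : ℝ → ℝ) (r : ℝ) : ℝ :=
  ((n : ℝ) - 1) * Real.sqrt (V r) / r

/-- Scalar curvature of `g = V⁻¹dr² + r²·(round metric)`:
`R = (n-1) r^{1-n} (d/dr)[r^{n-2}(1 - V)]`. -/
noncomputable def sphScalCurv (n : ℕ) (V : ℝ → ℝ) (r : ℝ) : ℝ :=
  ((n : ℝ) - 1) / r ^ (n - 1) * deriv (fun ρ => ρ ^ (n - 2) * (1 - V ρ)) r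

/-- The Hawking mass `m_H(r) = (r^{n-2}/2)[1 - V + r² k_S²/(n-1)²]`. -/
noncomputable def hawkingMass (n : ℕ) (V kS : ℝ → ℝ) (r : ℝ) : ℝ :=
  r ^ (n - 2) / 2 * (1 - V r + r ^ 2 * kS r ^ 2 / ((n : ℝ) - 1) ^ 2)

/-- The generalized Gauss–Bonnet Hawking mass
`m_GB(r) = m_H(r) + λ r^n/2 + 2 α̃ m_H(r)²/r^n`. -/
noncomputable def gbHawkingMass (n : ℕ) (lam ta : ℝ) (V kS : ℝ → ℝ) (r : ℝ) : ℝ :=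
  hawkingMass n V kS r + lam * r ^ n / 2 + 2 * ta * (hawkingMass n V kS r) ^ 2 / r ^ n

/-- `N₁ = H·[k_I - k_S/(n-1) - r k_S'/(n-1)]`. -/
noncomputable def gbN1 (n : ℕ) (V kI kS : ℝ → ℝ) (r : ℝ) : ℝ :=
  sphMeanCurv n V r *
    (kI r - kS r / ((n : ℝ) - 1) - r * deriv kS r / ((n : ℝ) - 1))

/-- `𝓜 = R + (k_I + k_S)² - k_I² - k_S²/(n-1)`. -/
noncomputable def gbM (n : ℕ) (V kI kS : ℝ → ℝ) (r : ℝ) : ℝ :=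
  sphScalCurv n V r + (kI r + kS r) ^ 2 - kI r ^ 2 - kS r ^ 2 / ((n : ℝ) - 1)

/-- `μ̃⁽ᵅ⁾ = (n-1)(n-2)(n-3)·(8 m_H/r^n)·[m_H'/r^{n-1} - n m_H/(2 r^n) + (k_S/(n-1)) N₁/H]`. -/
noncomputable def gbMuAlpha (n : ℕ) (V kI kS : ℝ → ℝ) (r : ℝ) : ℝ :=
  ((n : ℝ) - 1) * ((n : ℝ) - 2) * ((n : ℝ) - 3) * (8 * hawkingMass n V kS r / r ^ n) *
    (deriv (hawkingMass n V kS) r / r ^ (n - 1)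
      - (n : ℝ) * hawkingMass n V kS r / (2 * r ^ n)
      + kS r / ((n : ℝ) - 1) * gbN1 n V kI kS r / sphMeanCurv n V r)

/-- `J̃⁽ᵅ⁾_ν = 2 N₁ (n-2)(n-3) m_H/r^n`. -/
noncomputable def gbJAlpha (n : ℕ) (V kI kS : ℝ → ℝ) (r : ℝ) : ℝ :=
  2 * gbN1 n V kI kS r * ((n : ℝ) - 2) * ((n : ℝ) - 3) * hawkingMass n V kS r / r ^ n

/-! Differentiating `m_GB` and substituting both constraints gives, wherever `H ≠ 0`,
`m_GB' = r^{n-1}/(2(n-1)) · (16π μ̃ - 2 (k_S/H) · 8π J̃_ν)`: the Gauss–Bonnet cross terms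
`k_S N₁ m_H / (H r^n)` of `μ̃⁽ᵅ⁾` and `J̃⁽ᵅ⁾_ν` cancel. So constancy of `m_GB` forces
`μ̃ = (k_S/H) J̃_ν` with `|k_S/H| < 1` by the outermost condition, which is compatible with
the dominant energy condition `|J̃_ν| ≤ μ̃` only if `J̃_ν = 0`, and then `μ̃ = 0`. -/

lemma ne_zero_of_sphMeanCurv_ne_zero {n : ℕ} {V : ℝ → ℝ} {r : ℝ} (hH : sphMeanCurv n V r ≠ 0) :
    r ≠ 0 := by
  rintro rfl
  simp [sphMeanCurv] at hH

lemma hasDerivAt_hawkingMass {n : ℕ} (hn : 2 ≤ n) {V kS : ℝ → ℝ} {r : ℝ} (hr : r ≠ 0)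
    (hV : DifferentiableAt ℝ V r) (hkS : DifferentiableAt ℝ kS r) :
    HasDerivAt (hawkingMass n V kS)
      (r ^ (n - 1) / (2 * ((n : ℝ) - 1)) *
        (sphScalCurv n V r + ((n : ℝ) * kS r ^ 2 + 2 * r * kS r * deriv kS r) / ((n : ℝ) - 1)))
      r := by
  have hn1 : (n : ℝ) - 1 ≠ 0 := sub_ne_zero.mpr (by exact_mod_cast (show n ≠ 1 by omega))
  have hsplit : hawkingMass n V kS =
      fun ρ => ρ ^ (n - 2) * (1 - V ρ) / 2 + ρ ^ n * kS ρ ^ 2 / (2 * ((n : ℝ) - 1) ^ 2) := by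
    funext ρ
    rw [hawkingMass, ← Nat.sub_add_cancel hn, pow_add, Nat.add_sub_cancel]
    field_simp
  have hscal : HasDerivAt (fun ρ => ρ ^ (n - 2) * (1 - V ρ))
      (r ^ (n - 1) / ((n : ℝ) - 1) * sphScalCurv n V r) r := by
    have hd : DifferentiableAt ℝ (fun ρ => ρ ^ (n - 2) * (1 - V ρ)) r := by fun_prop
    refine hd.hasDerivAt.congr_deriv ?_
    rw [sphScalCurv]
    field_simp
  have hkin := ((hasDerivAt_pow n r).mul (hkS.hasDerivAt.pow 2)).div_const
    (2 * ((n : ℝ) - 1) ^ 2)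
  rw [hsplit]
  refine ((hscal.div_const 2).add hkin).congr_deriv ?_
  simp only [Pi.pow_apply, Nat.cast_ofNat, Nat.add_one_sub_one, pow_one]
  rw [show r ^ n = r ^ (n - 1) * r by rw [← pow_succ, Nat.sub_add_cancel (by omega)]]
  field_simp

lemma gbM_sub_two_mul_gbN1_div {n : ℕ} (hn : 2 ≤ n) {V kI kS : ℝ → ℝ} {r : ℝ}
    (hH : sphMeanCurv n V r ≠ 0) :
    gbM n V kI kS r - 2 * kS r * gbN1 n V kI kS r / sphMeanCurv n V r =
      sphScalCurv n V r + ((n : ℝ) * kS r ^ 2 + 2 * r * kS r * deriv kS r) / ((n : ℝ) - 1) := by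
  have hn1 : (n : ℝ) - 1 ≠ 0 := sub_ne_zero.mpr (by exact_mod_cast (show n ≠ 1 by omega))
  rw [gbM, gbN1]
  field_simp
  ring

lemma hasDerivAt_gbHawkingMass {n : ℕ} (hn : 2 ≤ n) (lam α : ℝ) {V kI kS : ℝ → ℝ} {r : ℝ}
    (hV : DifferentiableAt ℝ V r) (hkS : DifferentiableAt ℝ kS r)
    (hH : sphMeanCurv n V r ≠ 0) :
    HasDerivAt (gbHawkingMass n lam (((n : ℝ) - 2) * ((n : ℝ) - 3) * α) V kS)
      (r ^ (n - 1) / (2 * ((n : ℝ) - 1)) *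
        (gbM n V kI kS r + (n : ℝ) * ((n : ℝ) - 1) * lam + α * gbMuAlpha n V kI kS r
          - 2 * (kS r / sphMeanCurv n V r) * (gbN1 n V kI kS r + 2 * α * gbJAlpha n V kI kS r)))
      r := by
  have hn1 : (n : ℝ) - 1 ≠ 0 := sub_ne_zero.mpr (by exact_mod_cast (show n ≠ 1 by omega))
  have hr := ne_zero_of_sphMeanCurv_ne_zero hH
  have hm := hasDerivAt_hawkingMass hn hr hV hkS
  rw [← gbM_sub_two_mul_gbN1_div hn (kI := kI) hH] at hm
  have hpow := hasDerivAt_pow n r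
  refine ((hm.add ((hpow.const_mul lam).div_const 2)).add
    (((hm.pow 2).const_mul _).div hpow (pow_ne_zero n hr))).congr_deriv ?_
  simp only [gbMuAlpha, gbJAlpha, hm.deriv, Pi.pow_apply]
  rw [show r ^ n = r ^ (n - 1) * r by rw [← pow_succ, Nat.sub_add_cancel (by omega)]]
  field_simp
  ring

lemma eq_zero_of_abs_le_of_eq_mul {μ J c : ℝ} (hle : |J| ≤ μ) (hμ : μ = c * J) (hc : |c| < 1) :
    J = 0 := by
  have hself : |J| ≤ |c| * |J| := by
    rw [← abs_mul, ← hμ]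
    exact hle.trans (le_abs_self μ)
  have : |J| = 0 := by nlinarith [abs_nonneg J]
  exact abs_eq_zero.mp this

theorem gb_penrose_rigidity_general (n : ℕ) (hn : 3 ≤ n) (lam α ta rp : ℝ)
    (hta : ta = ((n : ℝ) - 2) * ((n : ℝ) - 3) * α)
    (V kI kS μ J : ℝ → ℝ)
    (hVd : ∀ r, rp < r → DifferentiableAt ℝ V r)
    (hkSd : ∀ r, rp < r → DifferentiableAt ℝ kS r)
    -- Gauss–Bonnet Hamiltonian constraint
    (hmu : ∀ r, rp < r → 16 * π * μ r =
      gbM n V kI kS r + (n : ℝ) * ((n : ℝ) - 1) * lam + α * gbMuAlpha n V kI kS r)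
    -- Gauss–Bonnet momentum constraint
    (hJ : ∀ r, rp < r → 8 * π * J r = gbN1 n V kI kS r + 2 * α * gbJAlpha n V kI kS r)
    -- dominant energy condition
    (hDEC : ∀ r, rp < r → |J r| ≤ μ r)
    -- outermost condition
    (hout : ∀ r, rp < r → |kS r| < sphMeanCurv n V r)
    -- equality case: `m_GB` is constant on `[r₊, ∞)`
    (hconst : ∀ r₁ r₂, rp ≤ r₁ → rp ≤ r₂ →
      gbHawkingMass n lam ta V kS r₁ = gbHawkingMass n lam ta V kS r₂) :
    ∀ r, rp < r → μ r = 0 ∧ J r = 0 := by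
  intro r hr
  have hH : 0 < sphMeanCurv n V r := (abs_nonneg _).trans_lt (hout r hr)
  have hflat : HasDerivAt (gbHawkingMass n lam ta V kS) 0 r := by
    refine (hasDerivAt_const r (gbHawkingMass n lam ta V kS rp)).congr_of_eventuallyEq ?_
    filter_upwards [Ioi_mem_nhds hr] with x hx using hconst x rp hx.le le_rfl
  subst hta
  have hbal := (hasDerivAt_gbHawkingMass (by omega) lam α (kI := kI) (hVd r hr) (hkSd r hr)
    hH.ne').unique hflat
  have hfactor : r ^ (n - 1) / (2 * ((n : ℝ) - 1)) ≠ 0 :=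
    div_ne_zero (pow_ne_zero _ (ne_zero_of_sphMeanCurv_ne_zero hH.ne'))
      (mul_ne_zero two_ne_zero (sub_ne_zero.mpr (by exact_mod_cast (show n ≠ 1 by omega))))
  rw [mul_eq_zero, or_iff_right hfactor, ← hmu r hr, ← hJ r hr] at hbal
  have hμJ : μ r = kS r / sphMeanCurv n V r * J r := by
    apply mul_left_cancel₀ (by positivity : (16 * π : ℝ) ≠ 0)
    linear_combination hbal
  have hc : |kS r / sphMeanCurv n V r| < 1 := by
    rw [abs_div, abs_of_pos hH]
    exact (div_lt_one hH).mpr (hout r hr)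
  have hJ0 := eq_zero_of_abs_le_of_eq_mul (hDEC r hr) hμJ hc
  exact ⟨by rw [hμJ, hJ0, mul_zero], hJ0⟩

/-- Rigidity for the Gauss–Bonnet Penrose inequality (equality case of Theorem 1.2, radial
form): if the generalized Gauss–Bonnet Hawking mass is constant on `[r₊, ∞)`, then the
matter energy and momentum densities vanish: `μ̃ = 0` and `J̃_ν = 0` on `(r₊, ∞)`. -/
theorem gb_penrose_rigidity (n : ℕ) (hn : 3 ≤ n) (lam α ta rp : ℝ) (hlam : 0 ≤ lam)
    (hα : 0 < α) (hta : ta = ((n : ℝ) - 2) * ((n : ℝ) - 3) * α) (hrp : 0 < rp)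
    (V kI kS μ J : ℝ → ℝ)
    (hVpos : ∀ r, rp < r → 0 < V r)
    (hVd : ∀ r, rp < r → DifferentiableAt ℝ V r)
    (hkSd : ∀ r, rp < r → DifferentiableAt ℝ kS r)
    (hmHd : ∀ r, rp < r → DifferentiableAt ℝ (hawkingMass n V kS) r)
    -- Gauss–Bonnet Hamiltonian constraint
    (hmu : ∀ r, rp < r → 16 * π * μ r =
      gbM n V kI kS r + (n : ℝ) * ((n : ℝ) - 1) * lam + α * gbMuAlpha n V kI kS r)
    -- Gauss–Bonnet momentum constraint
    (hJ : ∀ r, rp < r → 8 * π * J r = gbN1 n V kI kS r + 2 * α * gbJAlpha n V kI kS r)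
    -- dominant energy condition
    (hDEC : ∀ r, rp < r → |J r| ≤ μ r)
    -- outermost condition
    (hout : ∀ r, rp < r → |kS r| < sphMeanCurv n V r)
    -- equality case: `m_GB` is constant on `[r₊, ∞)`
    (hconst : ∀ r₁ r₂, rp ≤ r₁ → rp ≤ r₂ →
      gbHawkingMass n lam ta V kS r₁ = gbHawkingMass n lam ta V kS r₂) :
    ∀ r, rp < r → μ r = 0 ∧ J r = 0 :=
  gb_penrose_rigidity_general n hn lam α ta rp hta V kI kS μ J hVd hkSd hmu hJ hDEC hout hconst
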